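/- arXiv:1909.00905 — 3 statements merged into one kernel-verified Lean document; each statement's English description precedes it below -/
import Mathlib

section
/- For any real α > 0, ∫_{ℝ²} ( 2α² |y|^{α-2} / (1+|y|^α)² ) · ( (1-|y|^α)/(1+|y|^α) ) · log|y| dy = -4π. -/
/-!
In polar coordinates the integral is `2π ∫₀^∞ r f(r) dr`. The substitution `u = r ^ α` absorbs
both the Jacobian `α r ^ (α - 1)` and the factor `α` from `log r = log u / α`, leaving
`4π ∫₀^∞ (1 - u) log u / (1 + u)³ du`, which is independent of `α`. That integrand is the
derivative of `u log u / (1 + u)² + 1 / (1 + u)`, which goes from `1` at `0` to `0` at `∞`,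
so the integral is `-1`. Since `(1 - u) log u ≤ 0`, integrability comes for free from
monotonicity of the antiderivative.
-/

open Real MeasureTheory Set Filter Topology

theorem integral_fun_norm_euclideanSpace_fin_two {F : Type*} [NormedAddCommGroup F]
    [NormedSpace ℝ F] (f : ℝ → F) :
    ∫ y : EuclideanSpace ℝ (Fin 2), f ‖y‖ = (2 * π) • ∫ r in Ioi (0 : ℝ), r • f r := by
  rw [integral_fun_norm_addHaar, finrank_euclideanSpace_fin, measureReal_def,
    EuclideanSpace.volume_ball_fin_two]
  simp [mul_smul, pi_nonneg, ofNat_smul_eq_nsmul]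

lemma one_sub_mul_log_nonpos {u : ℝ} (hu : 0 < u) : (1 - u) * log u ≤ 0 := by
  rcases le_total u 1 with h | h
  · exact mul_nonpos_of_nonneg_of_nonpos (by linarith) (log_nonpos hu.le h)
  · exact mul_nonpos_of_nonpos_of_nonneg (by linarith) (log_nonneg h)

lemma hasDerivAt_mul_log_div_one_add_sq_add_inv {x : ℝ} (hx : 0 < x) :
    HasDerivAt (fun u : ℝ => u * log u / (1 + u) ^ 2 + (1 + u)⁻¹)
      ((1 - x) * log x / (1 + x) ^ 3) x := by
  have hx1 : 1 + x ≠ 0 := by positivity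
  have h_one_add : HasDerivAt (fun u : ℝ => 1 + u) 1 x := (hasDerivAt_id x).const_add 1
  refine (((hasDerivAt_mul_log hx.ne').fun_div (h_one_add.fun_pow 2) (pow_ne_zero 2 hx1)).fun_add
    (h_one_add.fun_inv hx1)).congr_deriv ?_
  field_simp
  ring

lemma tendsto_mul_log_div_one_add_sq_atTop :
    Tendsto (fun u : ℝ => u * log u / (1 + u) ^ 2) atTop (𝓝 0) := by
  have h_log : Tendsto (fun u : ℝ => log u / u) atTop (𝓝 0) := by
    simpa using tendsto_pow_log_div_mul_add_atTop 1 0 1 one_ne_zero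
  refine squeeze_zero' ?_ ?_ h_log
  · filter_upwards [eventually_ge_atTop 1] with u hu
    have := log_nonneg hu
    positivity
  · filter_upwards [eventually_ge_atTop 1] with u hu
    have := log_nonneg hu
    rw [div_le_div_iff₀ (by positivity) (by positivity)]
    nlinarith

theorem integral_one_sub_mul_log_div_one_add_pow_three :
    ∫ u in Ioi (0 : ℝ), (1 - u) * log u / (1 + u) ^ 3 = -1 := by
  have h_cont :
      ContinuousWithinAt (fun u : ℝ => u * log u / (1 + u) ^ 2 + (1 + u)⁻¹) (Ici 0) 0 :=
    ((continuous_mul_log.continuousAt.div (by fun_prop) (by norm_num)).add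
      ((continuousAt_const.add continuousAt_id).inv₀ (by norm_num))).continuousWithinAt
  have h_lim : Tendsto (fun u : ℝ => u * log u / (1 + u) ^ 2 + (1 + u)⁻¹) atTop (𝓝 0) := by
    simpa using tendsto_mul_log_div_one_add_sq_atTop.add
      (tendsto_inv_atTop_zero.comp (tendsto_atTop_add_const_left _ 1 tendsto_id))
  rw [integral_Ioi_of_hasDerivAt_of_nonpos h_cont
    (fun x hx => hasDerivAt_mul_log_div_one_add_sq_add_inv hx)
    (fun x (hx : 0 < x) =>
      div_nonpos_of_nonpos_of_nonneg (one_sub_mul_log_nonpos hx) (by positivity))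
    h_lim]
  simp

theorem integral_Ioi_radial_eq_neg_two {α : ℝ} (hα : 0 < α) :
    ∫ r in Ioi (0 : ℝ), r * ((2 * α ^ 2 * r ^ (α - 2) / (1 + r ^ α) ^ 2) *
      ((1 - r ^ α) / (1 + r ^ α)) * log r) = -2 := by
  calc _ = ∫ r in Ioi (0 : ℝ), (|α| * r ^ (α - 1)) •
          (2 * ((1 - r ^ α) * log (r ^ α) / (1 + r ^ α) ^ 3)) := by
        refine setIntegral_congr_fun measurableSet_Ioi fun r (hr : 0 < r) => ?_
        have h_rpow : r ^ (α - 1) = r * r ^ (α - 2) := by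
          rw [show α - 1 = 1 + (α - 2) by ring, rpow_add hr, rpow_one]
        simp only [smul_eq_mul, log_rpow hr, abs_of_pos hα, h_rpow]
        field_simp
    _ = ∫ u in Ioi (0 : ℝ), 2 * ((1 - u) * log u / (1 + u) ^ 3) :=
        integral_comp_rpow_Ioi (fun u => 2 * ((1 - u) * log u / (1 + u) ^ 3)) hα.ne'
    _ = -2 := by
        rw [integral_const_mul, integral_one_sub_mul_log_div_one_add_pow_three]
        norm_num

theorem stmt4 (α : ℝ) (hα : 0 < α) :
    ∫ y : EuclideanSpace ℝ (Fin 2),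
      (2 * α ^ 2 * ‖y‖ ^ (α - 2) / (1 + ‖y‖ ^ α) ^ 2) *
        ((1 - ‖y‖ ^ α) / (1 + ‖y‖ ^ α)) * Real.log ‖y‖ = -(4 * π) := by
  rw [integral_fun_norm_euclideanSpace_fin_two (fun r =>
      (2 * α ^ 2 * r ^ (α - 2) / (1 + r ^ α) ^ 2) * ((1 - r ^ α) / (1 + r ^ α)) * log r)]
  simp only [smul_eq_mul, integral_Ioi_radial_eq_neg_two hα]
  ring
end

section
/- For any real α > 0, the function Y₁(y) = |y|^{α/2} cos( (α/2) θ ) / (1+|y|^α), written in polar coordinates y = (r cos θ, r sin θ), satisfies ΔY₁(y) + ( 2α² |y|^{α-2} / (1+|y|^α)² ) Y₁(y) = 0 for all y ≠ 0. -/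
/-! Put `a = α / 2`, `G = r ^ (-a) + r ^ a` and `H = r ^ a - r ^ (-a)`, so that `Y₁ = cos (a θ) / G`,
`r G' = a H` and `r H' = a G`. The angular derivatives contribute `-a² Y₁ / r²`, and after
multiplying by `r² G³` the whole equation becomes `2 a² (H² - G² + 4) = 0`, which is the
identity `G² - H² = 4 r ^ (-a) r ^ a = 4`. -/

open Real Topology

noncomputable def radialProfile (a s : ℝ) : ℝ := (s ^ (-a) + s ^ a)⁻¹

section RadialProfile

variable {a s : ℝ}

theorem hasDerivAt_rpow_neg_add_rpow (hs : 0 < s) :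
    HasDerivAt (fun u => u ^ (-a) + u ^ a) (a * (s ^ a - s ^ (-a)) / s) s :=
  ((hasDerivAt_rpow_const (p := -a) (Or.inl hs.ne')).add
    (hasDerivAt_rpow_const (p := a) (Or.inl hs.ne'))).congr_deriv <| by
      rw [rpow_sub_one hs.ne', rpow_sub_one hs.ne']
      ring

theorem hasDerivAt_rpow_sub_rpow_neg (hs : 0 < s) :
    HasDerivAt (fun u => u ^ a - u ^ (-a)) (a * (s ^ (-a) + s ^ a) / s) s :=
  ((hasDerivAt_rpow_const (p := a) (Or.inl hs.ne')).sub
    (hasDerivAt_rpow_const (p := -a) (Or.inl hs.ne'))).congr_deriv <| by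
      rw [rpow_sub_one hs.ne', rpow_sub_one hs.ne']
      ring

theorem rpow_neg_add_rpow_sq_sub_rpow_sub_rpow_neg_sq (hs : 0 < s) :
    (s ^ (-a) + s ^ a) ^ 2 - (s ^ a - s ^ (-a)) ^ 2 = 4 := by
  have h : s ^ (-a) * s ^ a = 1 := by rw [← rpow_add hs, neg_add_cancel, rpow_zero]
  linear_combination 4 * h

theorem hasDerivAt_radialProfile (hs : 0 < s) :
    HasDerivAt (radialProfile a)
      (-a * (s ^ a - s ^ (-a)) / (s * (s ^ (-a) + s ^ a) ^ 2)) s := by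
  have hG : s ^ (-a) + s ^ a ≠ 0 := by positivity
  refine ((hasDerivAt_rpow_neg_add_rpow hs).inv hG).congr_deriv ?_
  field_simp

theorem hasDerivAt_deriv_radialProfile (hs : 0 < s) :
    HasDerivAt (deriv (radialProfile a))
      (a * (2 * a * (s ^ a - s ^ (-a)) ^ 2 + (s ^ (-a) + s ^ a) * (s ^ a - s ^ (-a))
        - a * (s ^ (-a) + s ^ a) ^ 2) / (s ^ 2 * (s ^ (-a) + s ^ a) ^ 3)) s := by
  have hG : s ^ (-a) + s ^ a ≠ 0 := by positivity
  have h := ((hasDerivAt_rpow_sub_rpow_neg (a := a) hs).const_mul (-a)).div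
    ((hasDerivAt_id s).mul ((hasDerivAt_rpow_neg_add_rpow (a := a) hs).pow 2))
    (by simp [hs.ne', hG])
  refine (h.congr_of_eventuallyEq ?_).congr_deriv ?_
  · filter_upwards [Ioi_mem_nhds hs] with u hu
    simp [(hasDerivAt_radialProfile hu).deriv, mul_sub]
  · simp only [Pi.mul_apply, Pi.pow_apply, id_eq]
    field_simp
    ring

theorem radialProfile_ode (hs : 0 < s) :
    deriv (deriv (radialProfile a)) s + (1 / s) * deriv (radialProfile a) s
      - (a ^ 2 / s ^ 2) * radialProfile a s
      + (8 * a ^ 2 * radialProfile a s ^ 2 / s ^ 2) * radialProfile a s = 0 := by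
  have hG : s ^ (-a) + s ^ a ≠ 0 := by positivity
  rw [(hasDerivAt_deriv_radialProfile hs).deriv, (hasDerivAt_radialProfile hs).deriv,
    radialProfile]
  field_simp
  linear_combination (-2 * a ^ 2) * rpow_neg_add_rpow_sq_sub_rpow_sub_rpow_neg_sq (a := a) hs

theorem rpow_two_mul_of_pos (hs : 0 < s) : s ^ (2 * a) = (s ^ a) ^ 2 := by
  rw [two_mul, rpow_add hs, sq]

theorem radialProfile_eq (hs : 0 < s) :
    radialProfile a s = s ^ a / (1 + s ^ (2 * a)) := by
  have hx : 0 < s ^ a := rpow_pos_of_pos hs a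
  rw [radialProfile, rpow_neg hs.le, rpow_two_mul_of_pos hs]
  field_simp

theorem rpow_sub_two_div_one_add_rpow_sq (hs : 0 < s) :
    s ^ (2 * a - 2) / (1 + s ^ (2 * a)) ^ 2 = radialProfile a s ^ 2 / s ^ 2 := by
  rw [radialProfile_eq hs, rpow_sub hs, rpow_two]
  field_simp
  rw [rpow_two_mul_of_pos hs]

end RadialProfile

theorem deriv_deriv_const_mul_cos_mul (K a θ : ℝ) :
    deriv (fun t => deriv (fun t' => K * cos (a * t')) t) θ = -a ^ 2 * (K * cos (a * θ)) := by
  have hcos : ∀ t, HasDerivAt (fun t' => cos (a * t')) (-sin (a * t) * a) t := fun t => by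
    simpa using ((hasDerivAt_id t).const_mul a).cos
  have hsin : HasDerivAt (fun t => -sin (a * t) * a) (-(cos (a * θ) * a) * a) θ := by
    simpa using (((hasDerivAt_id θ).const_mul a).sin.neg.mul_const a)
  simp only [deriv_const_mul_field', (hcos _).deriv, hsin.deriv]
  ring

theorem stmt6_general (α : ℝ)
    (Y₁ : ℝ → ℝ → ℝ)
    (hY₁ : ∀ r θ, Y₁ r θ = r ^ (α / 2) * Real.cos ((α / 2) * θ) / (1 + r ^ α)) :
    ∀ r θ : ℝ, 0 < r →
      deriv (fun s => deriv (fun s' => Y₁ s' θ) s) r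
        + (1 / r) * deriv (fun s => Y₁ s θ) r
        + (1 / r ^ 2) * deriv (fun t => deriv (fun t' => Y₁ r t') t) θ
        + (2 * α ^ 2 * r ^ (α - 2) / (1 + r ^ α) ^ 2) * Y₁ r θ = 0 := by
  intro r θ hr
  obtain ⟨a, rfl⟩ : ∃ a, α = 2 * a := ⟨α / 2, by ring⟩
  have hY : ∀ s t, 0 < s → Y₁ s t = cos (a * t) * radialProfile a s := fun s t hs => by
    rw [hY₁, radialProfile_eq hs, mul_div_cancel_left₀ a two_ne_zero]
    ring
  have hradial : (fun s => Y₁ s θ) =ᶠ[𝓝 r] fun s => cos (a * θ) * radialProfile a s :=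
    Filter.eventually_of_mem (Ioi_mem_nhds hr) fun s hs => hY s θ hs
  have hangular : (fun t => Y₁ r t) = fun t => radialProfile a r * cos (a * t) :=
    funext fun t => by rw [hY r t hr, mul_comm]
  have hpotential : 2 * (2 * a) ^ 2 * r ^ (2 * a - 2) / (1 + r ^ (2 * a)) ^ 2
      = 8 * a ^ 2 * radialProfile a r ^ 2 / r ^ 2 := by
    rw [mul_div_assoc, rpow_sub_two_div_one_add_rpow_sq hr]
    ring
  rw [hradial.deriv_eq, hradial.deriv.deriv_eq, hangular, deriv_deriv_const_mul_cos_mul,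
    hpotential, hY r θ hr, deriv_const_mul_field', deriv_const_mul_field']
  linear_combination cos (a * θ) * radialProfile_ode (a := a) hr

/-- The kernel element Y₁(r,θ) = r^{α/2} cos(αθ/2)/(1+r^α) of the linearized singular
Liouville operator, expressed in polar coordinates y = (r cos θ, r sin θ), solves the
equation with the Laplacian written in polar form:
Δ = ∂²/∂r² + (1/r)∂/∂r + (1/r²)∂²/∂θ². -/
theorem stmt6 (α : ℝ) (hα : 0 < α)
    (Y₁ : ℝ → ℝ → ℝ)
    (hY₁ : ∀ r θ, Y₁ r θ = r ^ (α / 2) * Real.cos ((α / 2) * θ) / (1 + r ^ α)) :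
    ∀ r θ : ℝ, 0 < r →
      deriv (fun s => deriv (fun s' => Y₁ s' θ) s) r
        + (1 / r) * deriv (fun s => Y₁ s θ) r
        + (1 / r ^ 2) * deriv (fun t => deriv (fun t' => Y₁ r t') t) θ
        + (2 * α ^ 2 * r ^ (α - 2) / (1 + r ^ α) ^ 2) * Y₁ r θ = 0 :=
  stmt6_general α Y₁ hY₁
end

section
/- Let α > 0 and a ∈ ℝ. If a · ∫_{ℝ²} (2α²|y|^{α-2}/(1+|y|^α)²) Y₀(y)² dy - (α(α-2)/3) · a · ∫_{ℝ²} (2α²|y|^{α-2}/(1+|y|^α)²) Y₀(y) log|y| dy = 0, where Y₀(y) = (1-|y|^α)/(1+|y|^α), then a = 0. -/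
open Real MeasureTheory

lemma stmt9_key (α r : ℝ) (hα : 2 < α) (hr : 0 ≤ r) :
    r ^ (α - 2) * (1 + r) ^ (α + 2) ≤ 2 ^ (α + 2) * (1 + r ^ α) ^ 2 := by
  have hta : (0:ℝ) ≤ r ^ α := Real.rpow_nonneg hr α
  rcases le_total r 1 with h1 | h1
  · have e1 : r ^ (α - 2) ≤ 1 := Real.rpow_le_one hr h1 (by linarith)
    have e2 : (1 + r) ^ (α + 2) ≤ 2 ^ (α + 2) :=
      Real.rpow_le_rpow (by linarith) (by linarith) (by linarith)
    have e3 : (1:ℝ) ≤ (1 + r ^ α) ^ 2 := by nlinarith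
    have e4 : (0:ℝ) ≤ (1 + r) ^ (α + 2) := Real.rpow_nonneg (by linarith) _
    have e5 : (0:ℝ) ≤ (2:ℝ) ^ (α + 2) := Real.rpow_nonneg (by norm_num) _
    have e6 : (0:ℝ) ≤ r ^ (α - 2) := Real.rpow_nonneg hr _
    nlinarith
  · have hr0 : (0:ℝ) < r := by linarith
    have e1 : (1 + r) ^ (α + 2) ≤ (2 * r) ^ (α + 2) :=
      Real.rpow_le_rpow (by linarith) (by linarith) (by linarith)
    have e2 : (2 * r) ^ (α + 2) = 2 ^ (α + 2) * r ^ (α + 2) :=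
      Real.mul_rpow (by norm_num) (by linarith)
    have e3 : r ^ (α - 2) * r ^ (α + 2) = (r ^ α) ^ 2 := by
      rw [← Real.rpow_add hr0, show (α - 2) + (α + 2) = α * 2 by ring,
        Real.rpow_mul hr]
      norm_num
    have e5 : (0:ℝ) ≤ (2:ℝ) ^ (α + 2) := Real.rpow_nonneg (by norm_num) _
    have e6 : (0:ℝ) ≤ r ^ (α - 2) := Real.rpow_nonneg hr _
    have e4 : (r ^ α) ^ 2 ≤ (1 + r ^ α) ^ 2 := by nlinarith
    calc r ^ (α - 2) * (1 + r) ^ (α + 2)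
        ≤ r ^ (α - 2) * (2 ^ (α + 2) * r ^ (α + 2)) := by
          rw [← e2]; exact mul_le_mul_of_nonneg_left e1 e6
      _ = 2 ^ (α + 2) * (r ^ (α - 2) * r ^ (α + 2)) := by ring
      _ = 2 ^ (α + 2) * (r ^ α) ^ 2 := by rw [e3]
      _ ≤ 2 ^ (α + 2) * (1 + r ^ α) ^ 2 := mul_le_mul_of_nonneg_left e4 e5

theorem stmt9 (α : ℝ) (hα : 2 < α) (a : ℝ)
    (h : a * (∫ y : EuclideanSpace ℝ (Fin 2),
          (2 * α ^ 2 * ‖y‖ ^ (α - 2) / (1 + ‖y‖ ^ α) ^ 2) *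
            ((1 - ‖y‖ ^ α) / (1 + ‖y‖ ^ α)) ^ 2)
        - (α * (α - 2) / 3) * a * (∫ y : EuclideanSpace ℝ (Fin 2),
          (2 * α ^ 2 * ‖y‖ ^ (α - 2) / (1 + ‖y‖ ^ α) ^ 2) *
            ((1 - ‖y‖ ^ α) / (1 + ‖y‖ ^ α)) * Real.log ‖y‖) = 0) :
    a = 0 := by
  have hα0 : (0:ℝ) < α := by linarith
  set f : EuclideanSpace ℝ (Fin 2) → ℝ := fun y =>
    (2 * α ^ 2 * ‖y‖ ^ (α - 2) / (1 + ‖y‖ ^ α) ^ 2) *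
      ((1 - ‖y‖ ^ α) / (1 + ‖y‖ ^ α)) ^ 2 with hf_def
  set g : EuclideanSpace ℝ (Fin 2) → ℝ := fun y =>
    (2 * α ^ 2 * ‖y‖ ^ (α - 2) / (1 + ‖y‖ ^ α) ^ 2) *
      ((1 - ‖y‖ ^ α) / (1 + ‖y‖ ^ α)) * Real.log ‖y‖ with hg_def
  -- second integral is nonpositive
  have hI₂ : (∫ y, g y) ≤ 0 := by
    apply integral_nonpos
    intro y
    have hr : (0:ℝ) ≤ ‖y‖ := norm_nonneg y
    have hd : (0:ℝ) < 1 + ‖y‖ ^ α := by positivity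
    have hA : (0:ℝ) ≤ 2 * α ^ 2 * ‖y‖ ^ (α - 2) / (1 + ‖y‖ ^ α) ^ 2 := by positivity
    simp only [hg_def, Pi.zero_apply]
    rcases le_total ‖y‖ 1 with h1 | h1
    · have hY : (0:ℝ) ≤ (1 - ‖y‖ ^ α) / (1 + ‖y‖ ^ α) := by
        have : ‖y‖ ^ α ≤ 1 := Real.rpow_le_one hr h1 hα0.le
        exact div_nonneg (by linarith) hd.le
      exact mul_nonpos_of_nonneg_of_nonpos (mul_nonneg hA hY) (Real.log_nonpos hr h1)
    · have hY : (1 - ‖y‖ ^ α) / (1 + ‖y‖ ^ α) ≤ 0 := by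
        have : (1:ℝ) ≤ ‖y‖ ^ α := Real.one_le_rpow h1 hα0.le
        apply div_nonpos_of_nonpos_of_nonneg <;> linarith
      exact mul_nonpos_of_nonpos_of_nonneg
        (mul_nonpos_of_nonneg_of_nonpos hA hY) (Real.log_nonneg h1)
  -- f is nonneg
  have hf_nonneg : ∀ y, 0 ≤ f y := fun y => by
    simp only [hf_def]; positivity
  -- integrability of f
  have hfin : Integrable f := by
    have hnr : ((Module.finrank ℝ (EuclideanSpace ℝ (Fin 2))) : ℝ) < α + 2 := by
      simp [finrank_euclideanSpace_fin]; linarith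
    refine ((integrable_one_add_norm hnr).const_mul
      (2 * α ^ 2 * 2 ^ (α + 2))).mono' ?_ (Filter.Eventually.of_forall fun y => ?_)
    · exact Measurable.aestronglyMeasurable (by fun_prop)
    · have hr : (0:ℝ) ≤ ‖y‖ := norm_nonneg y
      have hta : (0:ℝ) ≤ ‖y‖ ^ α := Real.rpow_nonneg hr α
      have hd : (0:ℝ) < 1 + ‖y‖ ^ α := by positivity
      rw [Real.norm_of_nonneg (hf_nonneg y)]
      have hB : ((1 - ‖y‖ ^ α) / (1 + ‖y‖ ^ α)) ^ 2 ≤ 1 := by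
        rw [sq_le_one_iff_abs_le_one, abs_div, abs_of_pos hd, div_le_one hd]
        rw [abs_le]; constructor <;> linarith
      have step1 : f y ≤ 2 * α ^ 2 * ‖y‖ ^ (α - 2) / (1 + ‖y‖ ^ α) ^ 2 :=
        mul_le_of_le_one_right (by positivity) hB
      have hE : (0:ℝ) < (1 + ‖y‖) ^ (α + 2) := Real.rpow_pos_of_pos (by linarith) _
      have step2 : 2 * α ^ 2 * ‖y‖ ^ (α - 2) / (1 + ‖y‖ ^ α) ^ 2
          ≤ 2 * α ^ 2 * 2 ^ (α + 2) * (1 + ‖y‖) ^ (-(α + 2)) := by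
        rw [Real.rpow_neg (by linarith), ← div_eq_mul_inv,
          div_le_div_iff₀ (by positivity) hE]
        have := stmt9_key α ‖y‖ hα hr
        nlinarith [sq_nonneg α]
      linarith
  -- first integral is positive
  have hI₁ : 0 < ∫ y, f y := by
    rw [integral_pos_iff_support_of_nonneg hf_nonneg hfin]
    have hsub : Metric.ball (0 : EuclideanSpace ℝ (Fin 2)) 1 \ {0} ⊆ Function.support f := by
      intro y hy
      obtain ⟨hy1, hy2⟩ := hy
      rw [mem_ball_zero_iff] at hy1
      have hyne : y ≠ 0 := hy2
      have hr0 : (0:ℝ) < ‖y‖ := norm_pos_iff.mpr hyne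
      have hp1 : (0:ℝ) < ‖y‖ ^ (α - 2) := Real.rpow_pos_of_pos hr0 _
      have hd : (0:ℝ) < 1 + ‖y‖ ^ α := by positivity
      have hlt : ‖y‖ ^ α < 1 := Real.rpow_lt_one hr0.le hy1 hα0
      have : 0 < f y := by
        apply mul_pos (by positivity)
        apply pow_pos
        apply div_pos (by linarith) hd
      exact ne_of_gt this
    calc (0:ENNReal) < volume (Metric.ball (0 : EuclideanSpace ℝ (Fin 2)) 1 \ {0}) := by
          rw [measure_diff_null (measure_singleton 0)]
          exact Metric.measure_ball_pos volume 0 one_pos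
      _ ≤ volume (Function.support f) := measure_mono hsub
  -- conclude
  have hc : 0 < α * (α - 2) / 3 := by
    apply div_pos (mul_pos hα0 (by linarith)) (by norm_num)
  have h2 : a * ((∫ y, f y) - (α * (α - 2) / 3) * (∫ y, g y)) = 0 := by
    linear_combination h
  rcases mul_eq_zero.mp h2 with h3 | h3
  · exact h3
  · exfalso
    have : (α * (α - 2) / 3) * (∫ y, g y) ≤ 0 :=
      mul_nonpos_of_nonneg_of_nonpos hc.le hI₂
    linarith
end
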